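/- If at least one of m and l is even, then λ(K_{m,l}) = ⌊m·l/2⌋, where K_{m,l} is the complete bipartite graph with vertex classes of sizes m and l; that is, B can keep the red and blue subgraphs isomorphic through all rounds of the game. -/

import Mathlib

open SimpleGraph FirstOrder

namespace SymPaper

/-! ### The symmetry breaking-preserving game `Sym(G)`

Two players A and B alternately color previously uncolored edges of `G` (A red, B blue),
A moving first.  A strategy is a function of the opponent-visible history as in the paper:
A's move is a function of B's previous moves, B's move is a function of A's moves so far. -/

variable {V : Type*}

/-- `rounds S1 S2 n` is the list of pairs (A's edge, B's edge) of the first `n` rounds,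
when A follows `S1` and B follows `S2`:
`a i = S1 (b 1, …, b (i-1))` and `b i = S2 (a 1, …, a i)`. -/
def rounds (S1 S2 : List (Sym2 V) → Sym2 V) : ℕ → List (Sym2 V × Sym2 V)
  | 0 => []
  | n + 1 =>
    let prev := rounds S1 S2 n
    let a := S1 (prev.map Prod.snd)
    let b := S2 (prev.map Prod.fst ++ [a])
    prev ++ [(a, b)]

/-- The subgraph (of the ambient vertex set) formed by a list of edges. -/
def graphOf (L : List (Sym2 V)) : SimpleGraph V :=
  SimpleGraph.fromEdgeSet {e | e ∈ L}

/-- The red and the blue subgraphs are isomorphic after round `i`. -/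
def isoAt (S1 S2 : List (Sym2 V) → Sym2 V) (i : ℕ) : Prop :=
  Nonempty (graphOf ((rounds S1 S2 i).map Prod.fst) ≃g graphOf ((rounds S1 S2 i).map Prod.snd))

/-- A strategy for player A: a function mapping every sequence of pairwise distinct
edges to an edge different from them and from all of its own values on prefixes
(required whenever such a fresh edge exists, i.e. `2·i + 1 ≤ |E(G)|`). -/
structure AStrategy (G : SimpleGraph V) where
  move : List (Sym2 V) → Sym2 V
  valid : ∀ L : List (Sym2 V), L.Nodup → (∀ e ∈ L, e ∈ G.edgeSet) →
    2 * L.length + 1 ≤ G.edgeSet.ncard →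
    move L ∈ G.edgeSet ∧ move L ∉ L ∧
      ∀ L' : List (Sym2 V), L' <+: L → L' ≠ L → move L' ≠ move L

/-- A strategy for player B: defined analogously on nonempty sequences. -/
structure BStrategy (G : SimpleGraph V) where
  move : List (Sym2 V) → Sym2 V
  valid : ∀ L : List (Sym2 V), L ≠ [] → L.Nodup → (∀ e ∈ L, e ∈ G.edgeSet) →
    2 * L.length ≤ G.edgeSet.ncard →
    move L ∈ G.edgeSet ∧ move L ∉ L ∧
      ∀ L' : List (Sym2 V), L' ≠ [] → L' <+: L → L' ≠ L → move L' ≠ move L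

/-- `l(S1,S2)`: the maximum `l` (at most the total number `⌊|E(G)|/2⌋` of rounds)
such that the red and blue subgraphs are isomorphic after every round `i ≤ l`. -/
noncomputable def playLength (G : SimpleGraph V) (S1 S2 : List (Sym2 V) → Sym2 V) : ℕ :=
  sSup {l : ℕ | l ≤ G.edgeSet.ncard / 2 ∧ ∀ i ≤ l, isoAt S1 S2 i}

/-- `λ(G) = max_{S2} min_{S1} l(S1,S2)`, the length of the game `Sym(G)`. -/
noncomputable def symLen (G : SimpleGraph V) : ℕ :=
  ⨆ S2 : BStrategy G, ⨅ S1 : AStrategy G, playLength G S1.move S2.move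

/-- `λ̃(G) = min_{S1} max_{S2} l(S1,S2)`. -/
noncomputable def symLenTilde (G : SimpleGraph V) : ℕ :=
  ⨅ S1 : AStrategy G, ⨆ S2 : BStrategy G, playLength G S1.move S2.move

/-! ### The Ehrenfeucht–Fraïssé game `EF(G0,G1)`

Vertex-disjointness is modelled by taking two different vertex types.  In each round the
spoiler (player A) picks a vertex of either graph and the duplicator (player B) answers with
a vertex of the other graph, so each round produces a pair in `V0 × V1`. -/

variable {V0 V1 : Type*}

/-- A duplicator strategy: given the history of pairs and the spoiler's pick
(a vertex of `G0` or of `G1`), produce the pair for this round; the spoiler's pick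
must be the corresponding component of the pair. -/
structure DStrategy (V0 V1 : Type*) where
  resp : List (V0 × V1) → V0 ⊕ V1 → V0 × V1
  resp_left : ∀ L u, (resp L (Sum.inl u)).1 = u
  resp_right : ∀ L w, (resp L (Sum.inr w)).2 = w

/-- The list of pairs of vertices chosen in the first `n` rounds when the duplicator
follows `D` and the spoiler follows `σ`. -/
def efRounds (D : DStrategy V0 V1) (σ : List (V0 × V1) → V0 ⊕ V1) : ℕ → List (V0 × V1)
  | 0 => []
  | n + 1 =>
    let prev := efRounds D σ n
    prev ++ [D.resp prev (σ prev)]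

/-- The chosen pairs form a partial isomorphism between `G0` and `G1`, i.e.
an isomorphism between the subgraphs induced by the chosen vertices. -/
def PartialIso (G0 : SimpleGraph V0) (G1 : SimpleGraph V1) (L : List (V0 × V1)) : Prop :=
  ∀ p ∈ L, ∀ q ∈ L, (p.1 = q.1 ↔ p.2 = q.2) ∧ (G0.Adj p.1 q.1 ↔ G1.Adj p.2 q.2)

/-- The duplicator can survive `k` rounds of `EF(G0,G1)` whatever the spoiler does. -/
def DuplicatorWins (G0 : SimpleGraph V0) (G1 : SimpleGraph V1) (k : ℕ) : Prop :=
  ∃ D : DStrategy V0 V1, ∀ σ : List (V0 × V1) → V0 ⊕ V1, PartialIso G0 G1 (efRounds D σ k)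

/-- `l_EF(G0,G1)`: the maximum number of rounds during which the duplicator, playing
optimally, survives irrespective of the spoiler's strategy (possibly `⊤`). -/
noncomputable def lEF (G0 : SimpleGraph V0) (G1 : SimpleGraph V1) : ℕ∞ :=
  sSup {k : ℕ∞ | ∃ m : ℕ, DuplicatorWins G0 G1 m ∧ k = (m : ℕ∞)}

/-- The canonical embedding of `ℕ∞` into the extended reals. -/
noncomputable def enatToEReal : ℕ∞ → EReal
  | none => ⊤
  | some m => ((m : ℝ) : EReal)

/-! ### Line graphs, paths, cycles -/

/-- The line graph `L(G)`: vertices are the edges of `G`, two of them adjacent iff they are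
distinct and share a vertex of `G`. -/
def lineG (G : SimpleGraph V) : SimpleGraph G.edgeSet where
  Adj e f := e ≠ f ∧ ∃ v : V, v ∈ (e : Sym2 V) ∧ v ∈ (f : Sym2 V)
  symm := by
    constructor
    rintro e f ⟨hne, v, hv, hw⟩
    exact ⟨hne.symm, v, hw, hv⟩
  loopless := by
    constructor
    rintro e ⟨hne, -⟩
    exact hne rfl

/-- `P n`: the path with `n` edges (on `n+1` vertices). -/
abbrev pathG (n : ℕ) : SimpleGraph (Fin (n + 1)) := SimpleGraph.pathGraph (n + 1)

/-- `C n`: the cycle with `n` edges (on `n` vertices); meaningful for `n ≥ 3`. -/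
abbrev cycleG (n : ℕ) : SimpleGraph (Fin n) := SimpleGraph.cycleGraph n

/-! ### Counting quantifiers of first-order formulas -/

/-- The number of quantifier occurrences in a first-order formula. -/
def quantCount {L : Language} {α : Type*} : ∀ {n : ℕ}, L.BoundedFormula α n → ℕ
  | _, .falsum => 0
  | _, .equal _ _ => 0
  | _, .rel _ _ => 0
  | _, .imp f g => quantCount f + quantCount g
  | _, .all f => quantCount f + 1


/-- Fresh edge existence for B-type constraints. -/
lemma freshB_exists (G : SimpleGraph V)
    (g : List (Sym2 V) → Sym2 V) (L : List (Sym2 V)) (hL : L ≠ [])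
    (hcard : 2 * L.length ≤ G.edgeSet.ncard) :
    ∃ x, x ∈ G.edgeSet ∧ x ∉ L ∧
      ∀ L', L' ≠ [] → L' <+: L → L' ≠ L → g L' ≠ x := by
  classical
  by_contra hc
  push_neg at hc
  set F : List (Sym2 V) :=
    L ++ (List.range (L.length - 1)).map (fun j => g (L.take (j + 1))) with hF
  have hlen : F.length = L.length + (L.length - 1) := by simp [hF]
  have hpos : 1 ≤ L.length := List.length_pos_iff.mpr hL
  have hsub : G.edgeSet ⊆ {x | x ∈ F} := by
    intro x hx
    by_cases hxL : x ∈ L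
    · exact List.mem_append_left _ hxL
    · obtain ⟨L', h1, h2, h3, h4⟩ := hc x hx hxL
      have htake : L' = L.take L'.length := List.prefix_iff_eq_take.mp h2
      have h5 : 1 ≤ L'.length := List.length_pos_iff.mpr h1
      have h6 : L'.length < L.length := by
        rcases lt_or_eq_of_le h2.length_le with h | h
        · exact h
        · exact absurd (h2.eq_of_length h) h3
      refine List.mem_append_right _ ?_
      refine List.mem_map.mpr ⟨L'.length - 1, List.mem_range.mpr (by omega), ?_⟩
      have : L'.length - 1 + 1 = L'.length := by omega
      rw [this, ← htake, h4]
  have h7 : G.edgeSet.ncard ≤ F.length := by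
    have := Set.ncard_le_ncard hsub F.finite_toSet
    calc G.edgeSet.ncard ≤ {x | x ∈ F}.ncard := this
      _ = F.toFinset.card := by rw [← List.coe_toFinset, Set.ncard_coe_finset]
      _ ≤ F.length := F.toFinset_card_le
  omega

/-- Fresh edge existence for A-type constraints. -/
lemma freshA_exists (G : SimpleGraph V)
    (g : List (Sym2 V) → Sym2 V) (L : List (Sym2 V))
    (hcard : 2 * L.length + 1 ≤ G.edgeSet.ncard) :
    ∃ x, x ∈ G.edgeSet ∧ x ∉ L ∧
      ∀ L', L' <+: L → L' ≠ L → g L' ≠ x := by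
  classical
  by_contra hc
  push_neg at hc
  set F : List (Sym2 V) :=
    L ++ (List.range L.length).map (fun j => g (L.take j)) with hF
  have hlen : F.length = L.length + L.length := by simp [hF]
  have hsub : G.edgeSet ⊆ {x | x ∈ F} := by
    intro x hx
    by_cases hxL : x ∈ L
    · exact List.mem_append_left _ hxL
    · obtain ⟨L', h2, h3, h4⟩ := hc x hx hxL
      have htake : L' = L.take L'.length := List.prefix_iff_eq_take.mp h2
      have h6 : L'.length < L.length := by
        rcases lt_or_eq_of_le h2.length_le with h | h
        · exact h
        · exact absurd (h2.eq_of_length h) h3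
      refine List.mem_append_right _ ?_
      exact List.mem_map.mpr ⟨L'.length, List.mem_range.mpr h6, by rw [← htake, h4]⟩
  have h7 : G.edgeSet.ncard ≤ F.length := by
    have := Set.ncard_le_ncard hsub F.finite_toSet
    calc G.edgeSet.ncard ≤ {x | x ∈ F}.ncard := this
      _ = F.toFinset.card := by rw [← List.coe_toFinset, Set.ncard_coe_finset]
      _ ≤ F.length := F.toFinset_card_le
  omega

open scoped Classical in
/-- B's patched strategy: follow `f` whenever legal, otherwise pick any fresh edge. -/
noncomputable def patchB (G : SimpleGraph V) (f : List (Sym2 V) → Sym2 V) :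
    List (Sym2 V) → Sym2 V
  | L =>
    if f L ∈ G.edgeSet ∧ f L ∉ L ∧
        (∀ L', L' ≠ [] → (hp : L' <+: L) → (hne : L' ≠ L) → patchB G f L' ≠ f L) then f L
    else if h : ∃ x, x ∈ G.edgeSet ∧ x ∉ L ∧
        (∀ L', L' ≠ [] → (hp : L' <+: L) → (hne : L' ≠ L) → patchB G f L' ≠ x) then h.choose
    else f L
termination_by L => L.length
decreasing_by
  all_goals exact lt_of_le_of_ne hp.length_le (fun hl => hne (hp.eq_of_length hl))

open scoped Classical in
/-- A fresh-picking strategy for A (used only to show `AStrategy` is nonempty). -/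
noncomputable def patchA (G : SimpleGraph V) (d : Sym2 V) :
    List (Sym2 V) → Sym2 V
  | L =>
    if h : ∃ x, x ∈ G.edgeSet ∧ x ∉ L ∧
        (∀ L', (hp : L' <+: L) → (hne : L' ≠ L) → patchA G d L' ≠ x) then h.choose
    else d
termination_by L => L.length
decreasing_by
  all_goals exact lt_of_le_of_ne hp.length_le (fun hl => hne (hp.eq_of_length hl))

/-- If following `f` is legal, the patched strategy follows `f`. -/
lemma patchB_eq (G : SimpleGraph V) (f : List (Sym2 V) → Sym2 V) (L : List (Sym2 V))
    (h : f L ∈ G.edgeSet ∧ f L ∉ L ∧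
      (∀ L', L' ≠ [] → L' <+: L → L' ≠ L → patchB G f L' ≠ f L)) :
    patchB G f L = f L := by
  rw [patchB, if_pos h]

lemma patchB_valid (G : SimpleGraph V) (f : List (Sym2 V) → Sym2 V)
    (L : List (Sym2 V)) (hne : L ≠ []) (hcard : 2 * L.length ≤ G.edgeSet.ncard) :
    patchB G f L ∈ G.edgeSet ∧ patchB G f L ∉ L ∧
      ∀ L', L' ≠ [] → L' <+: L → L' ≠ L → patchB G f L' ≠ patchB G f L := by
  by_cases h1 : f L ∈ G.edgeSet ∧ f L ∉ L ∧
      (∀ L', L' ≠ [] → L' <+: L → L' ≠ L → patchB G f L' ≠ f L)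
  · rw [patchB_eq G f L h1]; exact h1
  · have h2 : ∃ x, x ∈ G.edgeSet ∧ x ∉ L ∧
        (∀ L', L' ≠ [] → L' <+: L → L' ≠ L → patchB G f L' ≠ x) :=
      freshB_exists G (fun L => patchB G f L) L hne hcard
    have he : patchB G f L = h2.choose := by
      rw [patchB, if_neg h1, dif_pos h2]
    rw [he]; exact h2.choose_spec

lemma patchA_valid (G : SimpleGraph V) (d : Sym2 V)
    (L : List (Sym2 V)) (hcard : 2 * L.length + 1 ≤ G.edgeSet.ncard) :
    patchA G d L ∈ G.edgeSet ∧ patchA G d L ∉ L ∧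
      ∀ L', L' <+: L → L' ≠ L → patchA G d L' ≠ patchA G d L := by
  have h2 : ∃ x, x ∈ G.edgeSet ∧ x ∉ L ∧
      (∀ L', L' <+: L → L' ≠ L → patchA G d L' ≠ x) :=
    freshA_exists G (fun L => patchA G d L) L hcard
  have he : patchA G d L = h2.choose := by rw [patchA, dif_pos h2]
  rw [he]; exact h2.choose_spec

lemma rounds_length (S1 S2 : List (Sym2 V) → Sym2 V) (n : ℕ) :
    (rounds S1 S2 n).length = n := by
  induction n with
  | zero => rfl
  | succ n ih => simp [rounds, ih]

lemma rounds_prefix (S1 S2 : List (Sym2 V) → Sym2 V) {m n : ℕ} (h : m ≤ n) :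
    rounds S1 S2 m <+: rounds S1 S2 n := by
  induction n with
  | zero => rw [Nat.le_zero.mp h]
  | succ n ih =>
    rcases Nat.eq_or_lt_of_le h with h' | h'
    · rw [h']
    · exact (ih (Nat.lt_succ_iff.mp h')).trans
        (by rw [rounds]; exact List.prefix_append _ _)

lemma sym2_map_invol {φ : V ≃ V} (hinv : ∀ v, φ (φ v) = v) (e : Sym2 V) :
    Sym2.map φ (Sym2.map φ e) = e := by
  induction e using Sym2.inductionOn with
  | hf x y => simp [hinv]

lemma map_mem_edgeSet {G : SimpleGraph V} {φ : V ≃ V}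
    (hadj : ∀ u v, G.Adj (φ u) (φ v) ↔ G.Adj u v) {e : Sym2 V} (he : e ∈ G.edgeSet) :
    Sym2.map φ e ∈ G.edgeSet := by
  induction e using Sym2.inductionOn with
  | hf x y =>
    rw [Sym2.map_pair_eq, SimpleGraph.mem_edgeSet] at *
    exact (hadj x y).mpr he

/-- A vertex bijection gives an isomorphism between `graphOf L` and `graphOf (L.map _)`. -/
noncomputable def graphOfMapIso (φ : V ≃ V) (L : List (Sym2 V)) :
    graphOf L ≃g graphOf (L.map (Sym2.map φ)) where
  toEquiv := φ
  map_rel_iff' := by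
    intro u v
    simp only [graphOf, SimpleGraph.fromEdgeSet_adj, Set.mem_setOf_eq, Equiv.coe_fn_mk]
    constructor
    · rintro ⟨hm, hne⟩
      rw [show s(φ u, φ v) = Sym2.map φ s(u,v) from (Sym2.map_pair_eq φ u v).symm,
        List.mem_map_of_injective (Sym2.map.injective φ.injective)] at hm
      exact ⟨hm, fun h => hne (by rw [h])⟩
    · rintro ⟨hm, hne⟩
      refine ⟨?_, fun h => hne (φ.injective h)⟩
      rw [show s(φ u, φ v) = Sym2.map φ s(u,v) from (Sym2.map_pair_eq φ u v).symm,
        List.mem_map_of_injective (Sym2.map.injective φ.injective)]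
      exact hm



/-- B's mirror strategy: copy A's last move through the involution `φ`. -/
noncomputable def mirrorStrat (G : SimpleGraph V) (φ : V ≃ V) (d : Sym2 V) :
    List (Sym2 V) → Sym2 V :=
  patchB G (fun L => Sym2.map φ (L.getLastD d))

lemma mirror_invariant {G : SimpleGraph V} {φ : V ≃ V}
    (hadj : ∀ u v, G.Adj (φ u) (φ v) ↔ G.Adj u v)
    (hinv : ∀ v, φ (φ v) = v) (hfree : ∀ e ∈ G.edgeSet, Sym2.map φ e ≠ e)
    (d : Sym2 V) (S1 : AStrategy G) :
    ∀ i : ℕ, 2 * i ≤ G.edgeSet.ncard →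
    (rounds S1.move (mirrorStrat G φ d) i).map Prod.snd
      = ((rounds S1.move (mirrorStrat G φ d) i).map Prod.fst).map (Sym2.map φ) ∧
    ((rounds S1.move (mirrorStrat G φ d) i).map Prod.fst).Nodup ∧
    (∀ e ∈ (rounds S1.move (mirrorStrat G φ d) i).map Prod.fst, e ∈ G.edgeSet) ∧
    (∀ e ∈ (rounds S1.move (mirrorStrat G φ d) i).map Prod.fst,
        Sym2.map φ e ∉ (rounds S1.move (mirrorStrat G φ d) i).map Prod.fst) ∧
    (∀ e ∈ (rounds S1.move (mirrorStrat G φ d) i).map Prod.fst,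
        ∃ j < i, e = S1.move ((rounds S1.move (mirrorStrat G φ d) j).map Prod.snd)) := by
  have hminj : Function.Injective (Sym2.map φ) := Sym2.map.injective φ.injective
  intro i
  induction i with
  | zero => intro _; simp [rounds]
  | succ i ih =>
    intro hi
    obtain ⟨ih1, ih2, ih3, ih4, ih5⟩ := ih (by omega)
    set S2 : List (Sym2 V) → Sym2 V := mirrorStrat G φ d with hS2
    set R : List (Sym2 V × Sym2 V) := rounds S1.move S2 i with hRdef
    set A : List (Sym2 V) := R.map Prod.fst with hAdef
    set B : List (Sym2 V) := R.map Prod.snd with hBdef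
    have hlenA : A.length = i := by simp [hAdef, hRdef, rounds_length]
    have hlenB : B.length = i := by simp [hBdef, hRdef, rounds_length]
    set a : Sym2 V := S1.move B with hadef
    have hstep : rounds S1.move S2 (i + 1) = R ++ [(a, S2 (A ++ [a]))] := by
      rw [rounds]
    -- A's move is valid
    have hBnd : B.Nodup := by rw [ih1]; exact ih2.map hminj
    have hBsub : ∀ e ∈ B, e ∈ G.edgeSet := by
      rw [ih1]; intro e he
      obtain ⟨x, hx, rfl⟩ := List.mem_map.mp he
      exact map_mem_edgeSet hadj (ih3 x hx)
    obtain ⟨haE, haB, hafresh⟩ := S1.valid B hBnd hBsub (by rw [hlenB]; omega)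
    have haA : a ∉ A := by
      intro ha
      obtain ⟨j, hj, hje⟩ := ih5 a ha
      refine hafresh ((rounds S1.move S2 j).map Prod.snd)
        ((rounds_prefix S1.move S2 hj.le).map Prod.snd) ?_ hje.symm
      intro hcontra
      have h9 := congrArg List.length hcontra
      simp only [List.length_map, rounds_length] at h9
      omega
    have hmaB : Sym2.map φ a ∉ B := by
      intro h
      rw [ih1] at h
      obtain ⟨x, hx, hxe⟩ := List.mem_map.mp h
      exact haA (hminj hxe ▸ hx)
    have hmaA : Sym2.map φ a ∉ A := by
      intro h
      have h2 := List.mem_map_of_mem (f := Sym2.map φ) h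
      rw [sym2_map_invol hinv a, ← ih1] at h2
      exact haB h2
    have hmaa : Sym2.map φ a ≠ a := hfree a haE
    -- B's mirror reply is legal, so the patched strategy follows it
    have hfval : (fun L : List (Sym2 V) => Sym2.map φ (L.getLastD d)) (A ++ [a])
        = Sym2.map φ a := by simp
    have hb : S2 (A ++ [a]) = Sym2.map φ a := by
      rw [hS2, mirrorStrat]
      refine (patchB_eq G _ (A ++ [a]) ?_).trans hfval
      simp only [hfval]
      refine ⟨map_mem_edgeSet hadj haE, ?_, ?_⟩
      · intro h
        rcases List.mem_append.mp h with h | h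
        · exact hmaA h
        · exact hmaa (List.mem_singleton.mp h)
      · intro L' h1 h2 h3
        have hk1 : 1 ≤ L'.length := List.length_pos_iff.mpr h1
        have hklen : L'.length < (A ++ [a]).length := by
          rcases lt_or_eq_of_le h2.length_le with h | h
          · exact h
          · exact absurd (h2.eq_of_length h) h3
        have hkle : L'.length ≤ i := by
          simpa [hlenA] using Nat.lt_succ_iff.mp (by simpa [hlenA] using hklen)
        obtain ⟨j, hj⟩ : ∃ j, L'.length = j + 1 := ⟨L'.length - 1, by omega⟩
        -- L' is the A-history after round j+1
        have hAj : (rounds S1.move S2 (j + 1)).map Prod.fst = L' := by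
          have hpre : (rounds S1.move S2 (j + 1)).map Prod.fst <+: A ++ [a] := by
            have h4 : rounds S1.move S2 (j + 1) <+: rounds S1.move S2 (i + 1) :=
              rounds_prefix S1.move S2 (by omega)
            have := h4.map Prod.fst
            rwa [hstep, List.map_append] at this
          have e1 : (rounds S1.move S2 (j + 1)).map Prod.fst
              = (A ++ [a]).take (j + 1) := by
            rw [List.prefix_iff_eq_take.mp hpre]
            simp [rounds_length]
          have e2 : L' = (A ++ [a]).take (j + 1) := by
            conv_lhs => rw [List.prefix_iff_eq_take.mp h2]
            rw [hj]
          rw [e1, ← e2]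
        -- hence its patched value is a previous blue edge
        have hmem : patchB G (fun L => Sym2.map φ (L.getLastD d)) L'
            ∈ (rounds S1.move S2 (j + 1)).map Prod.snd := by
          have hstep' : rounds S1.move S2 (j + 1)
              = rounds S1.move S2 j ++
                [(S1.move ((rounds S1.move S2 j).map Prod.snd),
                  S2 ((rounds S1.move S2 j).map Prod.fst ++
                    [S1.move ((rounds S1.move S2 j).map Prod.snd)]))] := by
            rw [rounds]
          have hL' : L' = (rounds S1.move S2 j).map Prod.fst ++
              [S1.move ((rounds S1.move S2 j).map Prod.snd)] := by
            rw [← hAj, hstep']; simp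
          rw [hL', hstep']
          simp [hS2, mirrorStrat]
        intro hcontra
        apply hmaB
        rw [← hcontra]
        have hsubB : (rounds S1.move S2 (j + 1)).map Prod.snd <+: B :=
          (rounds_prefix S1.move S2 (by omega : j + 1 ≤ i)).map Prod.snd
        exact hsubB.subset hmem
    -- assemble the five clauses for round `i+1`
    have hA1 : (rounds S1.move S2 (i + 1)).map Prod.fst = A ++ [a] := by
      rw [hstep]; simp; rfl
    have hB1 : (rounds S1.move S2 (i + 1)).map Prod.snd = B ++ [Sym2.map φ a] := by
      rw [hstep]; simp [hb]; rfl
    rw [hA1, hB1]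
    refine ⟨?_, ?_, ?_, ?_, ?_⟩
    · simp [ih1]
    · refine List.nodup_append'.mpr ⟨ih2, List.nodup_singleton a, ?_⟩
      intro x hx hxa
      exact haA ((List.mem_singleton.mp hxa) ▸ hx)
    · intro e he
      rcases List.mem_append.mp he with h | h
      · exact ih3 e h
      · exact (List.mem_singleton.mp h) ▸ haE
    · intro e he hmem
      rcases List.mem_append.mp he with h | h
      · rcases List.mem_append.mp hmem with h' | h'
        · exact ih4 e h h'
        · have h'' := List.mem_singleton.mp h'
          apply hmaA
          have he2 : e = Sym2.map φ a := by rw [← h'', sym2_map_invol hinv]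
          rwa [← he2]
      · rcases List.mem_append.mp hmem with h' | h'
        · exact hmaA ((List.mem_singleton.mp h) ▸ h')
        · rw [List.mem_singleton.mp h] at h'
          exact hmaa (List.mem_singleton.mp h')
    · intro e he
      rcases List.mem_append.mp he with h | h
      · obtain ⟨j, hj, hje⟩ := ih5 e h
        exact ⟨j, by omega, hje⟩
      · exact ⟨i, by omega, List.mem_singleton.mp h⟩

lemma mirror_isoAt {G : SimpleGraph V} {φ : V ≃ V}
    (hadj : ∀ u v, G.Adj (φ u) (φ v) ↔ G.Adj u v)
    (hinv : ∀ v, φ (φ v) = v) (hfree : ∀ e ∈ G.edgeSet, Sym2.map φ e ≠ e)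
    (d : Sym2 V) (S1 : AStrategy G) (i : ℕ) (hi : 2 * i ≤ G.edgeSet.ncard) :
    isoAt S1.move (mirrorStrat G φ d) i := by
  obtain ⟨h1, -, -, -, -⟩ := mirror_invariant hadj hinv hfree d S1 i hi
  rw [isoAt, h1]
  exact ⟨graphOfMapIso φ _⟩

/-- The mirror strategy as a valid `BStrategy`. -/
noncomputable def mirrorBStrategy (G : SimpleGraph V) (φ : V ≃ V) (d : Sym2 V) :
    BStrategy G :=
  ⟨mirrorStrat G φ d, fun L h _ _ hcard => patchB_valid G _ L h hcard⟩

/-- The general mirror-strategy theorem: a fixed-edge-free involutive automorphism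
forces the game to last all `⌊|E(G)|/2⌋` rounds. -/
theorem symLen_eq_of_invol {G : SimpleGraph V} (φ : V ≃ V)
    (hadj : ∀ u v, G.Adj (φ u) (φ v) ↔ G.Adj u v)
    (hinv : ∀ v, φ (φ v) = v) (hfree : ∀ e ∈ G.edgeSet, Sym2.map φ e ≠ e)
    (d : Sym2 V) : symLen G = G.edgeSet.ncard / 2 := by
  haveI hAne : Nonempty (AStrategy G) :=
    ⟨⟨patchA G d, fun L _ _ hcard => patchA_valid G d L hcard⟩⟩
  haveI hBne : Nonempty (BStrategy G) := ⟨mirrorBStrategy G φ d⟩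
  have hzero : ∀ S1 S2 : List (Sym2 V) → Sym2 V, isoAt S1 S2 0 := by
    intro S1 S2
    show Nonempty (graphOf ((rounds S1 S2 0).map Prod.fst)
      ≃g graphOf ((rounds S1 S2 0).map Prod.snd))
    have h0 : (rounds S1 S2 0).map Prod.fst = (rounds S1 S2 0).map Prod.snd := rfl
    rw [h0]
    exact ⟨RelIso.refl _⟩
  have hupper : ∀ (S1 : AStrategy G) (S2 : List (Sym2 V) → Sym2 V),
      playLength G S1.move S2 ≤ G.edgeSet.ncard / 2 := by
    intro S1 S2
    refine csSup_le ⟨0, ?_⟩ fun b hb => hb.1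
    exact ⟨Nat.zero_le _, fun i hi => by rw [Nat.le_zero.mp hi]; exact hzero _ _⟩
  apply le_antisymm
  · apply ciSup_le
    intro S2
    exact (ciInf_le (OrderBot.bddBelow _) (Classical.arbitrary _)).trans (hupper _ S2.move)
  · refine le_trans ?_ (le_ciSup ⟨G.edgeSet.ncard / 2, ?_⟩ (mirrorBStrategy G φ d))
    · apply le_ciInf
      intro S1
      apply le_csSup ⟨G.edgeSet.ncard / 2, fun x hx => hx.1⟩
      refine ⟨le_refl _, fun i hi => ?_⟩
      exact mirror_isoAt hadj hinv hfree d S1 i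
        (by have := (Nat.le_div_iff_mul_le two_pos).mp hi; omega)
    · rintro x ⟨S2', rfl⟩
      exact (ciInf_le (OrderBot.bddBelow _) (Classical.arbitrary _)).trans (hupper _ S2'.move)

lemma completeBipartite_edgeSet_eq (m l : ℕ) :
    (completeBipartiteGraph (Fin m) (Fin l)).edgeSet
      = (fun p : Fin m × Fin l => s(Sum.inl p.1, Sum.inr p.2)) '' Set.univ := by
  ext e
  induction e using Sym2.inductionOn with
  | hf u w =>
    simp only [Set.image_univ, Set.mem_range]
    constructor
    · intro h
      rw [SimpleGraph.mem_edgeSet] at h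
      rcases u with x | y <;> rcases w with x' | y'
      · simp [completeBipartiteGraph] at h
      · exact ⟨(x, y'), rfl⟩
      · exact ⟨(x', y), Sym2.eq_swap⟩
      · simp [completeBipartiteGraph] at h
    · rintro ⟨⟨x, y⟩, h⟩
      rw [← h, SimpleGraph.mem_edgeSet]
      simp [completeBipartiteGraph]

lemma completeBipartite_ncard (m l : ℕ) :
    (completeBipartiteGraph (Fin m) (Fin l)).edgeSet.ncard = m * l := by
  have hinj : Function.Injective (fun p : Fin m × Fin l => s(Sum.inl p.1, Sum.inr p.2)) := by
    rintro ⟨x, y⟩ ⟨x', y'⟩ h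
    simp only [Sym2.eq_iff] at h
    rcases h with ⟨h1, h2⟩ | ⟨h1, h2⟩ <;> simp_all
  rw [completeBipartite_edgeSet_eq, Set.ncard_image_of_injective _ hinj, Set.ncard_univ,
    Nat.card_eq_fintype_card]
  simp

lemma exists_fpf_involution {m : ℕ} (hm : Even m) :
    ∃ e : Fin m ≃ Fin m, (∀ x, e (e x) = x) ∧ ∀ x, e x ≠ x := by
  obtain ⟨k, hk⟩ := hm
  have hk2 : m = k * 2 := by omega
  let c : Fin m ≃ Fin k × Fin 2 := (finCongr hk2).trans finProdFinEquiv.symm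
  let sw : Fin 2 ≃ Fin 2 := Equiv.swap 0 1
  have hsw2 : ∀ j : Fin 2, sw (sw j) = j := by decide
  have hswne : ∀ j : Fin 2, sw j ≠ j := by decide
  refine ⟨c.trans ((Equiv.prodCongr (Equiv.refl _) sw).trans c.symm), ?_, ?_⟩
  · intro x
    simp only [Equiv.trans_apply, Equiv.prodCongr_apply, Equiv.coe_refl, Equiv.apply_symm_apply]
    have hp : ∀ p : Fin k × Fin 2, Prod.map id (⇑sw) (Prod.map id (⇑sw) p) = p := by
      rintro ⟨a, b⟩; simp [hsw2]
    rw [hp, Equiv.symm_apply_apply]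
  · intro x h
    simp only [Equiv.trans_apply, Equiv.prodCongr_apply, Equiv.coe_refl] at h
    have h2 := congrArg c h
    rw [Equiv.apply_symm_apply] at h2
    have h3 : sw (c x).2 = (c x).2 := congrArg Prod.snd h2
    exact hswne _ h3

lemma symLen_of_isEmpty {W : Type*} (G : SimpleGraph W) [IsEmpty (Sym2 W)] :
    symLen G = 0 := by
  haveI : IsEmpty (BStrategy G) := ⟨fun S => isEmptyElim (S.move [])⟩
  rw [symLen, iSup, Set.range_eq_empty, csSup_empty]
  rfl

/-- If at least one of `m`, `l` is even, then `λ(K_{m,l}) = ⌊m·l/2⌋`. -/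
theorem statement17 (m l : ℕ) (h : Even m ∨ Even l) :
    symLen (completeBipartiteGraph (Fin m) (Fin l)) = m * l / 2 := by
  classical
  by_cases hzero : m = 0 ∧ l = 0
  · obtain ⟨rfl, rfl⟩ := hzero
    haveI : IsEmpty (Sym2 (Fin 0 ⊕ Fin 0)) := ⟨fun e => Sym2.ind (fun x _ => isEmptyElim x) e⟩
    rw [symLen_of_isEmpty]
  · have hne : Nonempty (Fin m ⊕ Fin l) := by
      rcases Nat.eq_zero_or_pos m with hm0 | hm0
      · have hl0 : l ≠ 0 := fun hco => hzero ⟨hm0, hco⟩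
        exact ⟨Sum.inr ⟨0, Nat.pos_of_ne_zero hl0⟩⟩
      · exact ⟨Sum.inl ⟨0, hm0⟩⟩
    obtain ⟨v⟩ := hne
    rcases h with hm | hl
    · obtain ⟨e, einv, efpf⟩ := exists_fpf_involution (m := m) hm
      set φ : (Fin m ⊕ Fin l) ≃ (Fin m ⊕ Fin l) :=
        Equiv.sumCongr e (Equiv.refl (Fin l)) with hφ
      have hadj : ∀ u w, (completeBipartiteGraph (Fin m) (Fin l)).Adj (φ u) (φ w)
          ↔ (completeBipartiteGraph (Fin m) (Fin l)).Adj u w := by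
        intro u w; cases u <;> cases w <;> simp [hφ, completeBipartiteGraph]
      have hinv : ∀ u, φ (φ u) = u := by
        intro u; cases u <;> simp [hφ, einv]
      have hfree : ∀ ed ∈ (completeBipartiteGraph (Fin m) (Fin l)).edgeSet,
          Sym2.map φ ed ≠ ed := by
        intro ed hed
        induction ed using Sym2.inductionOn with
        | hf u w =>
          rw [SimpleGraph.mem_edgeSet] at hed
          rcases u with x | y <;> rcases w with x' | y'
          · simp [completeBipartiteGraph] at hed
          · simp only [hφ, Sym2.map_pair_eq, Equiv.sumCongr_apply, Sum.map_inl, Sum.map_inr,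
              Equiv.coe_refl, id]
            simp [Sym2.eq_iff, efpf x]
          · simp only [hφ, Sym2.map_pair_eq, Equiv.sumCongr_apply, Sum.map_inl, Sum.map_inr,
              Equiv.coe_refl, id]
            simp [Sym2.eq_iff, efpf x']
          · simp [completeBipartiteGraph] at hed
      rw [symLen_eq_of_invol φ hadj hinv hfree s(v, v), completeBipartite_ncard]
    · obtain ⟨e, einv, efpf⟩ := exists_fpf_involution (m := l) hl
      set φ : (Fin m ⊕ Fin l) ≃ (Fin m ⊕ Fin l) :=
        Equiv.sumCongr (Equiv.refl (Fin m)) e with hφ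
      have hadj : ∀ u w, (completeBipartiteGraph (Fin m) (Fin l)).Adj (φ u) (φ w)
          ↔ (completeBipartiteGraph (Fin m) (Fin l)).Adj u w := by
        intro u w; cases u <;> cases w <;> simp [hφ, completeBipartiteGraph]
      have hinv : ∀ u, φ (φ u) = u := by
        intro u; cases u <;> simp [hφ, einv]
      have hfree : ∀ ed ∈ (completeBipartiteGraph (Fin m) (Fin l)).edgeSet,
          Sym2.map φ ed ≠ ed := by
        intro ed hed
        induction ed using Sym2.inductionOn with
        | hf u w =>
          rw [SimpleGraph.mem_edgeSet] at hed
          rcases u with x | y <;> rcases w with x' | y'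
          · simp [completeBipartiteGraph] at hed
          · simp only [hφ, Sym2.map_pair_eq, Equiv.sumCongr_apply, Sum.map_inl, Sum.map_inr,
              Equiv.coe_refl, id]
            simp [Sym2.eq_iff, efpf y']
          · simp only [hφ, Sym2.map_pair_eq, Equiv.sumCongr_apply, Sum.map_inl, Sum.map_inr,
              Equiv.coe_refl, id]
            simp [Sym2.eq_iff, efpf y]
          · simp [completeBipartiteGraph] at hed
      rw [symLen_eq_of_invol φ hadj hinv hfree s(v, v), completeBipartite_ncard]

end SymPaper
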